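/- Sequential composition is nonexpansive in its second argument: for all P, Q, Q' in T↓, d_U(P ; Q, P ; Q') ≤ d_U(Q, Q'). -/

import Mathlib

/-! Whether `P ; Q` and `P ; Q'` agree up to `U`-length `n` depends only on `Q ↾_U n`. A trace
`t ++ s` of `P ; Q` of `U`-length at most `n` has its `Q`-part `s` of `U`-length at most `n`, so `s`
survives in `Q ↾_U n`. A divergence `b ++ c` added by the restriction (`b` a `✓`-free trace of
`U`-length `n`) and preceded by a terminated trace `t` of `P` is re-cut at the prefix of `t ++ b` of
`U`-length `n`; that prefix is a trace of `P ; Q`, so `t ++ b ++ c` is a divergence of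
`(P ; Q) ↾_U n`. Hence `Q ↾_U n = Q' ↾_U n` gives `(P ; Q) ↾_U n = (P ; Q') ↾_U n`, and the
infimum defining `d_U` ranges over a larger set. -/

open scoped Classical

namespace CSPLL

variable {E : Type*}

/-- Events: `none` is the termination signal ✓, `some a` is a visible event. -/
abbrev Ev (E : Type*) := Option E

/-- A member of `Σ^{*✓}`: the termination event ✓ may occur only as the last element. -/
def ValidTrace (s : List (Ev E)) : Prop := (none : Ev E) ∉ s.dropLast

/-- The semantic domain `T↓`: pairs `(T, D)` of (behavioural) traces and divergences
satisfying the axioms of the divergence-strict traces model. -/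
structure TD (E : Type*) where
  T : Set (List (Ev E))
  D : Set (List (Ev E))
  valid : ∀ s ∈ T, ValidTrace s
  d_sub : D ⊆ T
  nonempty : [] ∈ T
  prefix_closed : ∀ s t : List (Ev E), s ++ t ∈ T → s ∈ T
  tick_div : ∀ s : List (Ev E), s ++ [none] ∈ D → s ∈ D
  div_ext : ∀ s t : List (Ev E), s ∈ D → (none : Ev E) ∉ s → ValidTrace t → s ++ t ∈ D

/-- Raw trace/divergence pairs. -/
abbrev Pair (E : Type*) := Set (List (Ev E)) × Set (List (Ev E))

def TD.pair (P : TD E) : Pair E := (P.T, P.D)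

/-- `lengthU U s` counts the occurrences of events from `U` in the trace `s`. -/
noncomputable def lengthU (U : Set E) (s : List (Ev E)) : ℕ :=
  (s.filter fun x => decide (∃ a ∈ U, x = some a)).length

/-- Restriction `(T,D) ↾_U n` of a trace/divergence pair to `U`-length `n`. -/
noncomputable def restrict (U : Set E) (n : ℕ) (P : Pair E) : Pair E :=
  let D' := P.2 ∪ {u | ∃ s t, s ∈ P.1 ∧ (none : Ev E) ∉ s ∧ lengthU U s = n ∧
                       ValidTrace t ∧ u = s ++ t}
  (D' ∪ {s ∈ P.1 | lengthU U s ≤ n}, D')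

/-- The metric `d_U(P,Q) = inf {2^{-n} | P ↾_U n = Q ↾_U n}` (taken in `[0,1]`). -/
noncomputable def dU (U : Set E) (P Q : Pair E) : ℝ :=
  sInf {x : ℝ | ∃ n : ℕ, restrict U n P = restrict U n Q ∧ x = (1 / 2 : ℝ) ^ n}

noncomputable def dTD (U : Set E) (P Q : TD E) : ℝ := dU U P.pair Q.pair

/-- Sequential composition `P ; Q` on trace/divergence pairs. -/
def seqP (P Q : TD E) : Pair E :=
  let D' := P.D ∪ {x | ∃ t s, t ++ [(none : Ev E)] ∈ P.T ∧ s ∈ Q.D ∧ x = t ++ s}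
  (D' ∪ {s ∈ P.T | (none : Ev E) ∉ s} ∪
     {x | ∃ t s, t ++ [(none : Ev E)] ∈ P.T ∧ s ∈ Q.T ∧ x = t ++ s}, D')

section Traces

variable {U : Set E}

@[simp]
theorem lengthU_append (s t : List (Ev E)) :
    lengthU U (s ++ t) = lengthU U s + lengthU U t := by
  simp [lengthU]

theorem exists_append_lengthU_eq :
    ∀ (s : List (Ev E)) {m : ℕ}, m ≤ lengthU U s → ∃ p q, s = p ++ q ∧ lengthU U p = m
  | [], m, hm => ⟨[], [], rfl, by simp_all [lengthU]⟩
  | a :: s, 0, _ => ⟨[], a :: s, rfl, by simp [lengthU]⟩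
  | a :: s, m + 1, hm => by
    have hcons : lengthU U (a :: s) = lengthU U [a] + lengthU U s := lengthU_append [a] s
    have ha : lengthU U [a] ≤ 1 := List.length_filter_le _ [a]
    obtain ⟨p, q, rfl, hp⟩ := exists_append_lengthU_eq s (m := m + 1 - lengthU U [a]) (by omega)
    exact ⟨a :: p, q, rfl, by rw [← List.singleton_append, lengthU_append]; omega⟩

theorem validTrace_append {s t : List (Ev E)} (hs : (none : Ev E) ∉ s) (ht : ValidTrace t) :
    ValidTrace (s ++ t) := by
  unfold ValidTrace at *
  rcases eq_or_ne t [] with rfl | hne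
  · simpa using fun h => hs ((List.dropLast_sublist s).mem h)
  · simp [List.dropLast_append_of_ne_nil hne, hs, ht]

theorem TD.not_mem_of_append_tick_mem {P : TD E} {t : List (Ev E)}
    (h : t ++ [(none : Ev E)] ∈ P.T) : (none : Ev E) ∉ t := by
  simpa [ValidTrace] using P.valid _ h

end Traces

def chopped (U : Set E) (n : ℕ) (T : Set (List (Ev E))) : Set (List (Ev E)) :=
  {u | ∃ s t, s ∈ T ∧ (none : Ev E) ∉ s ∧ lengthU U s = n ∧ ValidTrace t ∧ u = s ++ t}

section Restrict

variable {U : Set E} {n : ℕ} {R : Pair E} {u : List (Ev E)}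

theorem mem_restrict_fst :
    u ∈ (restrict U n R).1 ↔ u ∈ (restrict U n R).2 ∨ (u ∈ R.1 ∧ lengthU U u ≤ n) := Iff.rfl

theorem restrict_snd_subset_fst : (restrict U n R).2 ⊆ (restrict U n R).1 :=
  fun _ => Or.inl

theorem append_mem_chopped {T : Set (List (Ev E))} {c : List (Ev E)}
    (hpre : ∀ p, p <+: u → p ∈ T) (hu : (none : Ev E) ∉ u) (hn : n ≤ lengthU U u)
    (hc : ValidTrace c) : u ++ c ∈ chopped U n T := by
  obtain ⟨p, q, rfl, hp⟩ := exists_append_lengthU_eq u hn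
  exact ⟨p, q ++ c, hpre p (List.prefix_append p q), fun h => hu (List.mem_append_left q h), hp,
    validTrace_append (fun h => hu (List.mem_append_right p h)) hc, List.append_assoc p q c⟩

theorem append_mem_restrict_snd (hR : R.2 ⊆ R.1) {p r : List (Ev E)}
    (hp : p ∈ (restrict U n R).1) (hpn : (none : Ev E) ∉ p) (hlp : lengthU U p = n)
    (hr : ValidTrace r) : p ++ r ∈ (restrict U n R).2 := by
  have hR1 : p ∈ R.1 → p ++ r ∈ (restrict U n R).2 := fun h => Or.inr ⟨p, r, h, hpn, hlp, hr, rfl⟩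
  rcases hp with (hp | ⟨s, t, hs, hsn, hls, -, rfl⟩) | ⟨hp, -⟩
  · exact hR1 (hR hp)
  · refine Or.inr ⟨s, t ++ r, hs, hsn, hls, validTrace_append ?_ hr, List.append_assoc s t r⟩
    exact fun h => hpn (List.mem_append_right s h)
  · exact hR1 hp

end Restrict

section Seq

variable {P Q Q' : TD E} {U : Set E} {n : ℕ} {t s u : List (Ev E)}

theorem mem_seqP_snd :
    u ∈ (seqP P Q).2 ↔ u ∈ P.D ∨ ∃ t s, t ++ [(none : Ev E)] ∈ P.T ∧ s ∈ Q.D ∧ u = t ++ s :=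
  Iff.rfl

theorem mem_seqP_fst :
    u ∈ (seqP P Q).1 ↔ u ∈ (seqP P Q).2 ∨ (u ∈ P.T ∧ (none : Ev E) ∉ u) ∨
      ∃ t s, t ++ [(none : Ev E)] ∈ P.T ∧ s ∈ Q.T ∧ u = t ++ s :=
  or_assoc

theorem seqP_snd_subset_fst : (seqP P Q).2 ⊆ (seqP P Q).1 :=
  fun _ h => mem_seqP_fst.2 (Or.inl h)

theorem mem_seqP_fst_of_prefix (ht : t ++ [(none : Ev E)] ∈ P.T) (hs : s ∈ Q.T)
    (hu : u <+: t ++ s) : u ∈ (seqP P Q).1 := by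
  obtain ⟨v, huv⟩ := hu
  rcases List.append_eq_append_iff.1 huv with ⟨w, rfl, -⟩ | ⟨w, rfl, rfl⟩
  · have hu : u ++ (w ++ [none]) ∈ P.T := by rwa [← List.append_assoc]
    refine mem_seqP_fst.2 (Or.inr (Or.inl ⟨P.prefix_closed _ _ hu, fun h => ?_⟩))
    exact TD.not_mem_of_append_tick_mem ht (List.mem_append_left w h)
  · exact mem_seqP_fst.2 (Or.inr (Or.inr ⟨t, w, ht, Q.prefix_closed w v hs, rfl⟩))

theorem append_mem_restrict_snd_seqP (ht : t ++ [(none : Ev E)] ∈ P.T)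
    (hs : s ∈ (restrict U n Q.pair).2) : t ++ s ∈ (restrict U n (seqP P Q)).2 := by
  rcases hs with hs | ⟨b, c, hb, hbn, hlb, hc, rfl⟩
  · exact Or.inl (mem_seqP_snd.2 (Or.inr ⟨t, s, ht, hs, rfl⟩))
  · have htb : (none : Ev E) ∉ t ++ b := by
      simpa [not_or] using ⟨TD.not_mem_of_append_tick_mem ht, hbn⟩
    rw [← List.append_assoc]
    exact Or.inr (append_mem_chopped (fun p hp => mem_seqP_fst_of_prefix ht hb hp) htb
      (by simp [hlb]) hc)

theorem append_mem_restrict_fst_seqP (ht : t ++ [(none : Ev E)] ∈ P.T)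
    (hs : s ∈ (restrict U n Q.pair).1) (hl : lengthU U (t ++ s) ≤ n) :
    t ++ s ∈ (restrict U n (seqP P Q)).1 := by
  rcases hs with hs | ⟨hs, -⟩
  · exact Or.inl (append_mem_restrict_snd_seqP ht hs)
  · exact Or.inr ⟨mem_seqP_fst.2 (Or.inr (Or.inr ⟨t, s, ht, hs, rfl⟩)), hl⟩

theorem mem_restrict_fst_seqP_of_lengthU_le (hQ : restrict U n Q.pair ≤ restrict U n Q'.pair)
    (hu : u ∈ (seqP P Q).1) (hl : lengthU U u ≤ n) : u ∈ (restrict U n (seqP P Q')).1 := by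
  rcases mem_seqP_fst.1 hu with hu | hu | ⟨t, s, ht, hs, rfl⟩
  · rcases mem_seqP_snd.1 hu with hu | ⟨t, s, ht, hs, rfl⟩
    · exact restrict_snd_subset_fst (Or.inl (mem_seqP_snd.2 (Or.inl hu)))
    · exact restrict_snd_subset_fst (append_mem_restrict_snd_seqP ht (hQ.2 (Or.inl hs)))
  · exact Or.inr ⟨mem_seqP_fst.2 (Or.inr (Or.inl hu)), hl⟩
  · have hls : lengthU U s ≤ n := by simp only [lengthU_append] at hl; omega
    exact append_mem_restrict_fst_seqP ht (hQ.1 (Or.inr ⟨hs, hls⟩)) hl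

theorem restrict_seqP_mono (hQ : restrict U n Q.pair ≤ restrict U n Q'.pair) :
    restrict U n (seqP P Q) ≤ restrict U n (seqP P Q') := by
  have hD : (restrict U n (seqP P Q)).2 ⊆ (restrict U n (seqP P Q')).2 := by
    rintro u (hu | ⟨p, r, hp, hpn, hlp, hr, rfl⟩)
    · rcases mem_seqP_snd.1 hu with hu | ⟨t, s, ht, hs, rfl⟩
      · exact Or.inl (mem_seqP_snd.2 (Or.inl hu))
      · exact append_mem_restrict_snd_seqP ht (hQ.2 (Or.inl hs))
    · exact append_mem_restrict_snd seqP_snd_subset_fst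
        (mem_restrict_fst_seqP_of_lengthU_le hQ hp hlp.le) hpn hlp hr
  refine ⟨?_, hD⟩
  rintro u (hu | ⟨hu, hl⟩)
  · exact restrict_snd_subset_fst (hD hu)
  · exact mem_restrict_fst_seqP_of_lengthU_le hQ hu hl

theorem restrict_seqP_congr (hQ : restrict U n Q.pair = restrict U n Q'.pair) :
    restrict U n (seqP P Q) = restrict U n (seqP P Q') :=
  le_antisymm (restrict_seqP_mono hQ.le) (restrict_seqP_mono hQ.ge)

end Seq

theorem restrict_zero_pair (U : Set E) (R : TD E) :
    restrict U 0 R.pair = ({t | ValidTrace t}, {t | ValidTrace t}) := by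
  have hD : (restrict U 0 R.pair).2 = {t | ValidTrace t} := by
    ext u
    constructor
    · rintro (hu | ⟨s, t, -, hsn, -, ht, rfl⟩)
      · exact R.valid _ (R.d_sub hu)
      · exact validTrace_append hsn ht
    · intro hu
      exact Or.inr ⟨[], u, R.nonempty, List.not_mem_nil, by simp [lengthU], hu, rfl⟩
  refine Prod.ext ?_ hD
  ext u
  rw [mem_restrict_fst, hD]
  exact ⟨by rintro (hu | ⟨hu, -⟩); exacts [hu, R.valid _ hu], Or.inl⟩

/-- Sequential composition is nonexpansive in its second argument. -/
theorem seq_nonexpansive_right (U : Set E) (P Q Q' : TD E) :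
    dU U (seqP P Q) (seqP P Q') ≤ dU U Q.pair Q'.pair := by
  refine csInf_le_csInf ⟨0, ?_⟩ ⟨1, 0, ?_, by norm_num⟩ ?_
  · rintro x ⟨n, -, rfl⟩
    positivity
  · rw [restrict_zero_pair, restrict_zero_pair]
  · rintro x ⟨n, hn, rfl⟩
    exact ⟨n, restrict_seqP_congr hn, rfl⟩

end CSPLL
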